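/- (Weak Addition Theorem for coproducts) Let (S_1,v_1) and (S_2,v_2) be normed monoids and φ_i : S_i → S_i contractive monoid endomorphisms for i = 1,2. Equip S_1 × S_2 with the coproduct norm v(x_1,x_2) = v_1(x_1) + v_2(x_2). Then h_S(φ_1 × φ_2) = h_S(φ_1) + h_S(φ_2). -/

import Mathlib

open scoped ENNReal

/-- The `n`-th trajectory (with `traj φ x n = T_{n+1}(φ,x) = x·φ(x)·…·φⁿ(x)`). -/
def traj {S : Type*} [Semigroup S] (φ : S → S) (x : S) : ℕ → S
  | 0 => x
  | n + 1 => traj φ x n * φ^[n + 1] x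

/-- The semigroup entropy of `φ` at `x`: `h_S(φ,x) = lim_n v(T_n(φ,x))/n`
(the limit exists for contractive endomorphisms, and equals the `limsup`). -/
noncomputable def hloc {S : Type*} [Semigroup S] (v : S → ℝ) (φ : S → S) (x : S) : ℝ :=
  Filter.limsup (fun n : ℕ => v (traj φ x n) / ((n : ℝ) + 1)) Filter.atTop

/-- The semigroup entropy `h_S(φ) = sup_{x ∈ S} h_S(φ,x) ∈ [0,∞]`. -/
noncomputable def hent {S : Type*} [Semigroup S] (v : S → ℝ) (φ : S → S) : ℝ≥0∞ :=
  ⨆ x : S, ENNReal.ofReal (hloc v φ x)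

open Filter

set_option linter.unusedSectionVars false

section aux
variable {S : Type*} [Monoid S] {v : S → ℝ} {φ : S → S}

lemma iterate_mul' (hmul : ∀ x y : S, φ (x * y) = φ x * φ y) (k : ℕ) (x y : S) :
    φ^[k] (x * y) = φ^[k] x * φ^[k] y := by
  induction k with
  | zero => simp
  | succ n ih => simp [Function.iterate_succ_apply', ih, hmul]

lemma v_iterate (hcontr : ∀ x : S, v (φ x) ≤ v x) (k : ℕ) (x : S) :
    v (φ^[k] x) ≤ v x := by
  induction k with
  | zero => simp
  | succ n ih => rw [Function.iterate_succ_apply']; exact (hcontr _).trans ih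

lemma traj_add (hmul : ∀ x y : S, φ (x * y) = φ x * φ y) (x : S) (n m : ℕ) :
    traj φ x (n + m + 1) = traj φ x n * φ^[n + 1] (traj φ x m) := by
  induction m with
  | zero => rfl
  | succ m ih =>
      show traj φ x (n + m + 1 + 1) = _
      rw [traj, ih, traj, iterate_mul' hmul, mul_assoc,
        ← Function.iterate_add_apply]
      ring_nf

lemma tendsto_hloc (hv0 : ∀ x : S, 0 ≤ v x) (hvmul : ∀ x y : S, v (x * y) ≤ v x + v y)
    (hmul : ∀ x y : S, φ (x * y) = φ x * φ y) (hcontr : ∀ x : S, v (φ x) ≤ v x) (x : S) :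
    Tendsto (fun n : ℕ => v (traj φ x n) / ((n : ℝ) + 1)) atTop (nhds (hloc v φ x)) := by
  set u : ℕ → ℝ := fun n => match n with | 0 => 0 | n + 1 => v (traj φ x n) with hu
  have hsub : Subadditive u := by
    intro a b
    match a, b with
    | 0, b => simp [hu]
    | a + 1, 0 => simp [hu]
    | a + 1, b + 1 =>
        have h2 : a + 1 + (b + 1) = (a + b + 1) + 1 := by ring
        rw [h2]
        show v (traj φ x (a + b + 1)) ≤ u (a+1) + u (b+1)
        calc v (traj φ x (a + b + 1)) ≤ v (traj φ x a) + v (φ^[a+1] (traj φ x b)) := by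
              rw [traj_add hmul]; exact hvmul _ _
          _ ≤ v (traj φ x a) + v (traj φ x b) :=
              add_le_add le_rfl (v_iterate hcontr _ _)
  have hbdd : BddBelow (Set.range fun n => u n / n) := by
    refine ⟨0, fun r hr => ?_⟩
    obtain ⟨n, rfl⟩ := hr
    apply div_nonneg _ (Nat.cast_nonneg n)
    match n with
    | 0 => exact le_rfl
    | n + 1 => exact hv0 _
  have ht := (hsub.tendsto_lim hbdd).comp (tendsto_add_atTop_nat 1)
  have heq : (fun n : ℕ => u (n + 1) / ((n + 1 : ℕ) : ℝ))
      = fun n : ℕ => v (traj φ x n) / ((n : ℝ) + 1) := by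
    funext n; simp [hu]
  rw [show (fun n => u n / ↑n) ∘ (fun n => n + 1) = fun n : ℕ => u (n + 1) / ((n + 1 : ℕ) : ℝ)
    from rfl, heq] at ht
  have : hloc v φ x = hsub.lim := ht.limsup_eq
  rw [this]; exact ht

lemma hloc_nonneg (hv0 : ∀ x : S, 0 ≤ v x) (hvmul : ∀ x y : S, v (x * y) ≤ v x + v y)
    (hmul : ∀ x y : S, φ (x * y) = φ x * φ y) (hcontr : ∀ x : S, v (φ x) ≤ v x) (x : S) :
    0 ≤ hloc v φ x :=
  ge_of_tendsto (tendsto_hloc hv0 hvmul hmul hcontr x)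
    (Eventually.of_forall fun n => div_nonneg (hv0 _) (by positivity))

end aux

lemma traj_prod {S₁ S₂ : Type*} [Monoid S₁] [Monoid S₂] (φ₁ : S₁ → S₁) (φ₂ : S₂ → S₂)
    (x₁ : S₁) (x₂ : S₂) (n : ℕ) :
    traj (Prod.map φ₁ φ₂) (x₁, x₂) n = (traj φ₁ x₁ n, traj φ₂ x₂ n) := by
  induction n with
  | zero => rfl
  | succ n ih => simp [traj, ih, Prod.map_iterate, Prod.ext_iff]

/-- **Weak Addition Theorem – coproducts.** For contractive monoid
endomorphisms `φᵢ` of normed monoids `(Sᵢ,vᵢ)` (`i = 1,2`), the endomorphism `φ₁ × φ₂`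
of `S₁ × S₂` with the coproduct norm `v(x₁,x₂) = v₁ x₁ + v₂ x₂` satisfies
`h_S(φ₁ × φ₂) = h_S(φ₁) + h_S(φ₂)`. -/
theorem statement_9 {S₁ S₂ : Type*} [Monoid S₁] [Monoid S₂]
    (v₁ : S₁ → ℝ) (v₂ : S₂ → ℝ)
    (hv₁0 : ∀ x : S₁, 0 ≤ v₁ x) (hv₁mul : ∀ x y : S₁, v₁ (x * y) ≤ v₁ x + v₁ y)
    (hv₁one : v₁ 1 = 0)
    (hv₂0 : ∀ x : S₂, 0 ≤ v₂ x) (hv₂mul : ∀ x y : S₂, v₂ (x * y) ≤ v₂ x + v₂ y)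
    (hv₂one : v₂ 1 = 0)
    (φ₁ : S₁ → S₁) (hφ₁mul : ∀ x y : S₁, φ₁ (x * y) = φ₁ x * φ₁ y)
    (hφ₁one : φ₁ 1 = 1) (hφ₁contr : ∀ x : S₁, v₁ (φ₁ x) ≤ v₁ x)
    (φ₂ : S₂ → S₂) (hφ₂mul : ∀ x y : S₂, φ₂ (x * y) = φ₂ x * φ₂ y)
    (hφ₂one : φ₂ 1 = 1) (hφ₂contr : ∀ x : S₂, v₂ (φ₂ x) ≤ v₂ x) :
    hent (fun p : S₁ × S₂ => v₁ p.1 + v₂ p.2) (Prod.map φ₁ φ₂)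
      = hent v₁ φ₁ + hent v₂ φ₂ := by
  have : Nonempty S₁ := ⟨1⟩
  have : Nonempty S₂ := ⟨1⟩
  have hA : ∀ x, 0 ≤ hloc v₁ φ₁ x := hloc_nonneg hv₁0 hv₁mul hφ₁mul hφ₁contr
  have hB : ∀ x, 0 ≤ hloc v₂ φ₂ x := hloc_nonneg hv₂0 hv₂mul hφ₂mul hφ₂contr
  have key : ∀ x₁ x₂,
      hloc (fun p : S₁ × S₂ => v₁ p.1 + v₂ p.2) (Prod.map φ₁ φ₂) (x₁, x₂)
        = hloc v₁ φ₁ x₁ + hloc v₂ φ₂ x₂ := by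
    intro x₁ x₂
    have h1 := tendsto_hloc hv₁0 hv₁mul hφ₁mul hφ₁contr x₁
    have h2 := tendsto_hloc hv₂0 hv₂mul hφ₂mul hφ₂contr x₂
    have hsum : Tendsto (fun n : ℕ =>
        (fun p : S₁ × S₂ => v₁ p.1 + v₂ p.2) (traj (Prod.map φ₁ φ₂) (x₁, x₂) n)
          / ((n : ℝ) + 1)) atTop (nhds (hloc v₁ φ₁ x₁ + hloc v₂ φ₂ x₂)) := by
      refine (h1.add h2).congr fun n => ?_
      simp only [traj_prod, add_div]
    exact hsum.limsup_eq
  unfold hent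
  calc (⨆ p : S₁ × S₂, ENNReal.ofReal
          (hloc (fun p : S₁ × S₂ => v₁ p.1 + v₂ p.2) (Prod.map φ₁ φ₂) p))
      = ⨆ x₁ : S₁, ⨆ x₂ : S₂,
          (ENNReal.ofReal (hloc v₁ φ₁ x₁) + ENNReal.ofReal (hloc v₂ φ₂ x₂)) := by
        rw [iSup_prod]
        congr 1; funext x₁; congr 1; funext x₂
        rw [key x₁ x₂, ENNReal.ofReal_add (hA x₁) (hB x₂)]
    _ = (⨆ x : S₁, ENNReal.ofReal (hloc v₁ φ₁ x))
          + ⨆ x : S₂, ENNReal.ofReal (hloc v₂ φ₂ x) := by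
        simp_rw [← ENNReal.add_iSup, ← ENNReal.iSup_add]
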